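/- In the setting of the preceding statement, and assuming additionally the Lipschitz condition ‖g_n(x)−g_n(y)‖_{n+1} ≤ c(μ'_n/μ_n)‖x−y‖_n for all n, x, y, there exists a constant C₂ > 0, independent of c, such that ‖f_n(x)−f_n(y)‖_{⌊μ̃⁻¹(η_n)⌋+1} ≤ cC₂ ‖x−y‖_{⌊μ̃⁻¹(η_{n−1})⌋+1} for all n ≥ 1 and x, y ∈ X (one may take C₂ = KK̃θ(3θ²)^{a+ã} log(3θ²), where K̃ and ã are the constants in the forward Lipschitz estimate ‖𝒢(m,n)(x)−𝒢(m,n)(y)‖_m ≤ K̃(μ_m/μ_n)^{ã}‖x−y‖_n for m ≥ n). -/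

import Mathlib

noncomputable section

open Filter Metric Set Topology

variable {X : Type*} [NormedAddCommGroup X] [NormedSpace ℝ X]

/-- A discrete growth rate: strictly increasing, `μ 0 = 1`, `μ n → ∞`. -/
def IsGrowthRate (μ : ℕ → ℝ) : Prop :=
  StrictMono μ ∧ μ 0 = 1 ∧ Filter.Tendsto μ Filter.atTop Filter.atTop

/-- The piecewise linear extension `μ̃` of a growth rate. -/
def tildeExt (μ : ℕ → ℝ) (t : ℝ) : ℝ :=
  μ ⌊t⌋₊ + (t - (⌊t⌋₊ : ℝ)) * (μ (⌊t⌋₊ + 1) - μ ⌊t⌋₊)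

/-- `⌊μ̃⁻¹ t⌋`, i.e. the largest `n` with `μ n ≤ t` (for `t ≥ 1`). -/
def floorInvTilde (μ : ℕ → ℝ) (t : ℝ) : ℕ := sSup {n : ℕ | μ n ≤ t}

/-- `⌊μ̃⁻¹ (η (k-1))⌋ + 1`. -/
def idxQ (μ η : ℕ → ℝ) (k : ℕ) : ℕ := floorInvTilde μ (η (k - 1)) + 1

def evolFwd (A : ℕ → X →L[ℝ] X) (k : ℕ) : ℕ → X →L[ℝ] X
  | 0 => ContinuousLinearMap.id ℝ X
  | n + 1 => (A (k + n)).comp (evolFwd A k n)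

/-- The evolution family `Φ_A(m,k) = A_{m-1} ∘ ⋯ ∘ A_k` for `m ≥ k`. -/
def evol (A : ℕ → X →L[ℝ] X) (m k : ℕ) : X →L[ℝ] X := evolFwd A k (m - k)

def evolFwdE (A : ℕ → X ≃L[ℝ] X) (k : ℕ) : ℕ → X ≃L[ℝ] X
  | 0 => ContinuousLinearEquiv.refl ℝ X
  | n + 1 => (evolFwdE A k n).trans (A (k + n))

/-- Two-sided evolution family of a sequence of invertible operators:
`Φ_A(m,k) = A_{m-1}⋯A_k` for `m > k`, `Id` for `m = k`, `A_m⁻¹⋯A_{k-1}⁻¹` for `m < k`. -/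
def evolEquiv (A : ℕ → X ≃L[ℝ] X) (m k : ℕ) : X ≃L[ℝ] X :=
  if k ≤ m then evolFwdE A k (m - k) else (evolFwdE A m (k - m)).symm

def evolE (A : ℕ → X ≃L[ℝ] X) (m k : ℕ) : X →L[ℝ] X := (evolEquiv A m k : X →L[ℝ] X)

/-- The time-rescaled sequence `Q_n^{μ,η} = Φ_A(⌊μ̃⁻¹(η n)⌋+1, ⌊μ̃⁻¹(η (n-1))⌋+1)`. -/
def Qseq (A : ℕ → X →L[ℝ] X) (μ η : ℕ → ℝ) (n : ℕ) : X →L[ℝ] X :=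
  evol A (idxQ μ η (n + 1)) (idxQ μ η n)

def QseqE (A : ℕ → X ≃L[ℝ] X) (μ η : ℕ → ℝ) (n : ℕ) : X ≃L[ℝ] X :=
  evolEquiv A (idxQ μ η (n + 1)) (idxQ μ η n)

/-- A sequence of norms on `X`. -/
def IsNormFamily (Nrm : ℕ → X → ℝ) : Prop :=
  ∀ k, (∀ x y : X, Nrm k (x + y) ≤ Nrm k x + Nrm k y) ∧
    (∀ (c : ℝ) (x : X), Nrm k (c • x) = |c| * Nrm k x) ∧
    (∀ x : X, Nrm k x = 0 → x = 0)

/-- Each norm in the family is equivalent to the ambient norm. -/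
def NormsEquivalent (Nrm : ℕ → X → ℝ) : Prop :=
  ∀ k, ∃ α β : ℝ, 0 < α ∧ 0 < β ∧ ∀ x : X, α * ‖x‖ ≤ Nrm k x ∧ Nrm k x ≤ β * ‖x‖

/-- (od1)–(od2): a sequence of projections compatible with the dynamics, such that the
restriction of `A k` to `Ker P k` is an isomorphism onto `Ker P (k+1)`. -/
def ProjectionsCompat (A P : ℕ → X →L[ℝ] X) : Prop :=
  (∀ k, 1 ≤ k → (P k).comp (P k) = P k) ∧
  (∀ k, 1 ≤ k → (A k).comp (P k) = (P (k + 1)).comp (A k)) ∧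
  (∀ k, 1 ≤ k → Set.BijOn (⇑(A k)) {x : X | P k x = 0} {x : X | P (k + 1) x = 0})

/-- μ-dichotomy with respect to a sequence of norms, relative to given projections.
For `m ≤ k`, `Φ_A(m,k)(Id - P_k)x` denotes the unique `z ∈ Ker P_m` with
`Φ_A(k,m) z = (Id - P_k) x`. -/
def MuDichotomyNormsWith (μ : ℕ → ℝ) (A P : ℕ → X →L[ℝ] X) (Nrm : ℕ → X → ℝ) : Prop :=
  ProjectionsCompat A P ∧
  ∃ N ν : ℝ, 1 ≤ N ∧ 0 < ν ∧
    (∀ k m : ℕ, 1 ≤ k → k ≤ m → ∀ x : X,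
      Nrm m (evol A m k (P k x)) ≤ N * (μ m / μ k) ^ (-ν) * Nrm k x) ∧
    (∀ m k : ℕ, 1 ≤ m → m ≤ k → ∀ x z : X, P m z = 0 → evol A k m z = x - P k x →
      Nrm m z ≤ N * (μ k / μ m) ^ (-ν) * Nrm k x)

/-- Ordinary dichotomy with respect to a sequence of norms, relative to given projections. -/
def OrdinaryDichotomyNormsWith (A P : ℕ → X →L[ℝ] X) (Nrm : ℕ → X → ℝ) : Prop :=
  ProjectionsCompat A P ∧
  ∃ K : ℝ, 1 ≤ K ∧
    (∀ k m : ℕ, 1 ≤ k → k ≤ m → ∀ x : X, Nrm m (evol A m k (P k x)) ≤ K * Nrm k x) ∧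
    (∀ m k : ℕ, 1 ≤ m → m ≤ k → ∀ x z : X, P m z = 0 → evol A k m z = x - P k x →
      Nrm m z ≤ K * Nrm k x)

/-- μ-dichotomy (with respect to a sequence of norms) of a system of invertible operators. -/
def MuDichotomyNormsE (μ : ℕ → ℝ) (A : ℕ → X ≃L[ℝ] X) (Nrm : ℕ → X → ℝ) : Prop :=
  ∃ P : ℕ → X →L[ℝ] X,
    (∀ k, 1 ≤ k → (P k).comp (P k) = P k) ∧
    (∀ k, 1 ≤ k → ((A k : X →L[ℝ] X)).comp (P k) = (P (k + 1)).comp ((A k : X →L[ℝ] X))) ∧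
    (∀ k, 1 ≤ k → Set.BijOn (⇑(A k)) {x : X | P k x = 0} {x : X | P (k + 1) x = 0}) ∧
    ∃ N ν : ℝ, 1 ≤ N ∧ 0 < ν ∧
      (∀ k m : ℕ, 1 ≤ k → k ≤ m → ∀ x : X,
        Nrm m (evolE A m k (P k x)) ≤ N * (μ m / μ k) ^ (-ν) * Nrm k x) ∧
      (∀ m k : ℕ, 1 ≤ m → m ≤ k → ∀ x : X,
        Nrm m (evolE A m k (x - P k x)) ≤ N * (μ k / μ m) ^ (-ν) * Nrm k x)

/-- μ-dichotomy with respect to the original norm. -/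
def MuDichotomy (μ : ℕ → ℝ) (B : ℕ → X →L[ℝ] X) : Prop :=
  ∃ P : ℕ → X →L[ℝ] X, MuDichotomyNormsWith μ B P fun _ x => ‖x‖

/-- The scaled system `Ã_n = (μ_{n+1}/μ_n)^{-λ} A_n`. -/
def scaledSys (μ : ℕ → ℝ) (A : ℕ → X ≃L[ℝ] X) (l : ℝ) (n : ℕ) : X →L[ℝ] X :=
  ((μ (n + 1) / μ n) ^ (-l)) • (A n : X →L[ℝ] X)

/-- The generalized dichotomy spectrum `Σ_{μD,𝔸}`. -/
def muSpectrum (μ : ℕ → ℝ) (A : ℕ → X ≃L[ℝ] X) : Set ℝ :=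
  {l : ℝ | ¬ MuDichotomy μ (scaledSys μ A l)}

/-- The exponential growth rate `n ↦ e^n`. -/
def expRate : ℕ → ℝ := fun n => Real.exp n

/-- `Σ_{ED,ℚ}`: the Sacker–Sell spectrum of the time-rescaled system. -/
def expSpectrumQ (μ : ℕ → ℝ) (A : ℕ → X ≃L[ℝ] X) : Set ℝ :=
  {l : ℝ | ¬ MuDichotomy expRate fun n => Real.exp (-l) • (QseqE A μ expRate n : X →L[ℝ] X)}

/-- `f` is a homeomorphism. -/
def IsHomeoOf {Y : Type*} [TopologicalSpace Y] (f : Y → Y) : Prop :=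
  ∃ h : Y ≃ₜ Y, ∀ x, h x = f x

/-- The perturbed maps `x ↦ A_n x + g_n x`. -/
def pert (A : ℕ → X ≃L[ℝ] X) (g : ℕ → X → X) (n : ℕ) : X → X := fun x => A n x + g n x

def nlFwd (F : ℕ → X → X) (n : ℕ) : ℕ → X → X
  | 0 => id
  | j + 1 => F (n + j) ∘ nlFwd F n j

/-- Nonlinear evolution `𝒢(m,n) = (A_{m-1}+g_{m-1})∘⋯∘(A_n+g_n)` for `m ≥ n`. -/
def nlEvol (A : ℕ → X ≃L[ℝ] X) (g : ℕ → X → X) (m n : ℕ) : X → X := nlFwd (pert A g) n (m - n)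

def nlBwd (F : ℕ → X → X) (m : ℕ) : ℕ → X → X
  | 0 => id
  | j + 1 => nlBwd F m j ∘ Function.invFun (F (m + j))

/-- Nonlinear evolution `𝒢(m,n) = (A_m+g_m)⁻¹∘⋯∘(A_{n-1}+g_{n-1})⁻¹` for `m ≤ n`. -/
def nlEvolBwd (A : ℕ → X ≃L[ℝ] X) (g : ℕ → X → X) (m n : ℕ) : X → X :=
  nlBwd (pert A g) m (n - m)

/-- The rescaled nonlinearities `f_n`. -/
def fSeq (A : ℕ → X ≃L[ℝ] X) (g : ℕ → X → X) (μ : ℕ → ℝ) (n : ℕ) (x : X) : X :=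
  ∑ j ∈ Finset.Icc (floorInvTilde μ (expRate (n - 1)) + 1) (floorInvTilde μ (expRate n)),
    evolE A (floorInvTilde μ (expRate n) + 1) (j + 1)
      (g j (nlEvol A g j (floorInvTilde μ (expRate (n - 1)) + 1) x))

/-- The class `𝒪_μ^k`, with constant `M`. -/
def InOmegaMu (μ : ℕ → ℝ) (k : ℕ) (f : ℕ → X → X) (M : ℝ) : Prop :=
  (∀ n, ContDiff ℝ (k : ℕ∞) (f n)) ∧ (∀ n, f n 0 = 0) ∧ (∀ n, fderiv ℝ (f n) 0 = 0) ∧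
  ∀ n, 1 ≤ n → ∀ x : X, ∀ j : ℕ, j ≤ k →
    ‖iteratedFDeriv ℝ j (f n) x‖ ≤ M * (μ (n + 1) - μ n) / μ n

lemma nrm_zero' {Nrm : ℕ → X → ℝ} (h : IsNormFamily Nrm) (k : ℕ) : Nrm k 0 = 0 := by
  have := (h k).2.1 0 0
  simpa using this

lemma nrm_nonneg' {Nrm : ℕ → X → ℝ} (h : IsNormFamily Nrm) (k : ℕ) (x : X) : 0 ≤ Nrm k x := by
  have h1 := (h k).1 x (-x)
  have h2 := (h k).2.1 (-1) x
  have h0 : Nrm k 0 = 0 := nrm_zero' h k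
  simp only [neg_one_smul, abs_neg, abs_one, one_mul] at h2
  rw [add_neg_cancel, h0] at h1
  linarith

lemma nrm_sum_le' {Nrm : ℕ → X → ℝ} (h : IsNormFamily Nrm) (k : ℕ) {ι : Type*}
    (s : Finset ι) (f : ι → X) : Nrm k (∑ i ∈ s, f i) ≤ ∑ i ∈ s, Nrm k (f i) := by
  classical
  induction s using Finset.induction_on with
  | empty => simp [nrm_zero' h k]
  | insert _ _ hx ih =>
    rename_i i s
    rw [Finset.sum_insert hx, Finset.sum_insert hx]
    exact le_trans ((h k).1 _ _) (by linarith)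

lemma floorInvTilde_spec {μ : ℕ → ℝ} (hμ : IsGrowthRate μ) {t : ℝ} (ht : 1 ≤ t) :
    μ (floorInvTilde μ t) ≤ t ∧ t < μ (floorInvTilde μ t + 1) := by
  obtain ⟨hmono, h0, htend⟩ := hμ
  have hne : (0 : ℕ) ∈ {n : ℕ | μ n ≤ t} := by simp [h0, ht]
  have hbdd : BddAbove {n : ℕ | μ n ≤ t} := by
    obtain ⟨N, hN⟩ := (htend.eventually (eventually_gt_atTop t)).exists_forall_of_atTop
    refine ⟨N, fun n hn => ?_⟩
    by_contra hcon
    exact absurd hn (not_le.mpr (hN n (le_of_not_ge hcon)))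
  have hmem : floorInvTilde μ t ∈ {n : ℕ | μ n ≤ t} := Nat.sSup_mem ⟨0, hne⟩ hbdd
  refine ⟨hmem, ?_⟩
  by_contra hcon
  have hmem2 : floorInvTilde μ t + 1 ∈ {n : ℕ | μ n ≤ t} := le_of_not_gt hcon
  have h2 : floorInvTilde μ t + 1 ≤ floorInvTilde μ t := le_csSup hbdd hmem2
  omega

lemma sum_Icc_sub_le' (F : ℕ → ℝ) (hF : Monotone F) {p q : ℕ} (h : p ≤ q + 1) :
    ∑ j ∈ Finset.Icc p q, (F (j + 1) - F j) ≤ F (q + 1) - F p := by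
  rcases le_or_gt p q with hpq | hpq
  · have : ∀ q', p ≤ q' → ∑ j ∈ Finset.Icc p q', (F (j + 1) - F j) = F (q' + 1) - F p := by
      intro q' hq'
      induction q', hq' using Nat.le_induction with
      | base => simp
      | succ m hm ih =>
        rw [Finset.sum_Icc_succ_top (by omega), ih]
        ring
    rw [this q hpq]
  · rw [Finset.Icc_eq_empty (by omega), Finset.sum_empty]
    have := hF (show p ≤ q + 1 by omega)
    linarith

/-- Lipschitz estimate for the rescaled nonlinearities `f_n`,
with the explicit constant `C₂ = K K̃ θ (3θ²)^{a+ã} log(3θ²)`. -/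
theorem fSeq_lipschitz [CompleteSpace X]
    (μ : ℕ → ℝ) (hμ : IsGrowthRate μ) (θ : ℝ) (hθ : 1 ≤ θ)
    (hμr : ∀ n, μ (n + 1) / μ n ≤ θ)
    (A : ℕ → X ≃L[ℝ] X) (Nrm : ℕ → X → ℝ) (hNrm : IsNormFamily Nrm)
    (hEq : NormsEquivalent Nrm)
    (K a : ℝ) (hK : 0 < K) (ha : 0 < a)
    (hfwd : ∀ k m : ℕ, 1 ≤ k → k ≤ m → ∀ x : X,
      Nrm m (evolE A m k x) ≤ K * (μ m / μ k) ^ a * Nrm k x)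
    (g : ℕ → X → X) (M : ℝ) (hM : 0 < M)
    (hbnd : ∀ n, 1 ≤ n → ∀ x : X, Nrm (n + 1) (g n x) ≤ M * ((μ (n + 1) - μ n) / μ n))
    (c : ℝ) (hc : 0 < c)
    (hlip : ∀ n, 1 ≤ n → ∀ x y : X,
      Nrm (n + 1) (g n x - g n y) ≤ c * ((μ (n + 1) - μ n) / μ n) * Nrm n (x - y))
    (hhom : ∀ n, 1 ≤ n → IsHomeoOf (pert A g n))
    (K' a' : ℝ) (hK' : 0 < K') (ha' : 0 < a')
    (hG : ∀ m n : ℕ, 1 ≤ n → n ≤ m → ∀ x y : X,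
      Nrm m (nlEvol A g m n x - nlEvol A g m n y) ≤ K' * (μ m / μ n) ^ a' * Nrm n (x - y)) :
    ∀ n, 1 ≤ n → ∀ x y : X,
      Nrm (floorInvTilde μ (expRate n) + 1) (fSeq A g μ n x - fSeq A g μ n y) ≤
        c * (K * K' * θ * (3 * θ ^ 2) ^ (a + a') * Real.log (3 * θ ^ 2)) *
          Nrm (floorInvTilde μ (expRate (n - 1)) + 1) (x - y) := by
  intro n hn x y
  have hmono := hμ.1
  have hμ1 : ∀ m, 1 ≤ μ m := fun m => hμ.2.1 ▸ hmono.monotone (Nat.zero_le m)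
  have hμpos : ∀ m, 0 < μ m := fun m => lt_of_lt_of_le one_pos (hμ1 m)
  set p := floorInvTilde μ (expRate (n - 1)) with hp_def
  set q := floorInvTilde μ (expRate n) with hq_def
  have he1 : (1 : ℝ) ≤ expRate (n - 1) := Real.one_le_exp (Nat.cast_nonneg _)
  have he2 : (1 : ℝ) ≤ expRate n := Real.one_le_exp (Nat.cast_nonneg _)
  obtain ⟨hp1, hp2⟩ := floorInvTilde_spec hμ he1
  obtain ⟨hq1, hq2⟩ := floorInvTilde_spec hμ he2
  -- exp n = exp (n-1) * e
  have hcast : ((n - 1 : ℕ) : ℝ) = (n : ℝ) - 1 := by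
    rw [Nat.cast_sub hn]; simp
  have hexp : expRate n = expRate (n - 1) * Real.exp 1 := by
    unfold expRate
    rw [← Real.exp_add, hcast]; ring_nf
  have he3 : Real.exp 1 < 3 := by
    have := Real.exp_one_lt_d9; linarith
  have hepos : (0 : ℝ) < Real.exp 1 := Real.exp_pos 1
  -- p ≤ q
  have hmonoexp : expRate (n - 1) ≤ expRate n := by
    apply Real.exp_le_exp.mpr
    exact_mod_cast Nat.cast_le.mpr (Nat.sub_le n 1)
  have hpq : p ≤ q := by
    have h1 : μ p < μ (q + 1) := lt_of_le_of_lt (le_trans hp1 hmonoexp) hq2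
    have := hmono.lt_iff_lt.mp h1
    omega
  -- ratio bound: μ (q+1) ≤ 3θ² μ (p+1)
  have hθ0 : (0 : ℝ) < θ := lt_of_lt_of_le one_pos hθ
  have hRat : μ (q + 1) ≤ 3 * θ ^ 2 * μ (p + 1) := by
    have h1 : μ (q + 1) ≤ θ * μ q := (div_le_iff₀ (hμpos q)).mp (hμr q)
    have h2 : expRate n ≤ 3 * μ (p + 1) := by
      rw [hexp]
      calc expRate (n - 1) * Real.exp 1 ≤ μ (p + 1) * 3 :=
            mul_le_mul hp2.le he3.le hepos.le (hμpos _).le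
        _ = 3 * μ (p + 1) := by ring
    nlinarith [hμpos (p + 1), hμpos q, hq1]
  have h3θ : (1 : ℝ) ≤ 3 * θ ^ 2 := by nlinarith
  have h3θ0 : (0 : ℝ) < 3 * θ ^ 2 := by linarith
  set D := Nrm (p + 1) (x - y) with hD_def
  have hD0 : 0 ≤ D := nrm_nonneg' hNrm _ _
  set B := (3 * θ ^ 2) ^ (a + a') with hB_def
  have hB0 : 0 ≤ B := Real.rpow_nonneg h3θ0.le _
  -- rewrite the difference as a sum
  have hdiff : fSeq A g μ n x - fSeq A g μ n y =
      ∑ j ∈ Finset.Icc (p + 1) q, evolE A (q + 1) (j + 1)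
        (g j (nlEvol A g j (p + 1) x) - g j (nlEvol A g j (p + 1) y)) := by
    unfold fSeq
    rw [← Finset.sum_sub_distrib]
    exact Finset.sum_congr rfl fun j _ => (map_sub (evolE A (q + 1) (j + 1)) _ _).symm
  -- per-term bound
  have key : ∀ j ∈ Finset.Icc (p + 1) q,
      Nrm (q + 1) (evolE A (q + 1) (j + 1)
        (g j (nlEvol A g j (p + 1) x) - g j (nlEvol A g j (p + 1) y))) ≤
      c * K * K' * B * D * ((μ (j + 1) - μ j) / μ j) := by
    intro j hj
    simp only [Finset.mem_Icc] at hj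
    set u := nlEvol A g j (p + 1) x with hu
    set v := nlEvol A g j (p + 1) y with hv
    have t1 := hfwd (j + 1) (q + 1) (by omega) (by omega) (g j u - g j v)
    have t2 := hlip j (by omega) u v
    have t3 := hG j (p + 1) (by omega) (by omega) x y
    set P1 := (μ (q + 1) / μ (j + 1)) ^ a with hP1
    set P2 := (μ j / μ (p + 1)) ^ a' with hP2
    have hP1nn : 0 ≤ P1 := Real.rpow_nonneg (div_nonneg (hμpos _).le (hμpos _).le) _
    have hP2nn : 0 ≤ P2 := Real.rpow_nonneg (div_nonneg (hμpos _).le (hμpos _).le) _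
    have hr0 : 0 ≤ (μ (j + 1) - μ j) / μ j :=
      div_nonneg (sub_nonneg.mpr (hmono.monotone (Nat.le_succ j))) (hμpos j).le
    have hPP : P1 * P2 ≤ B := by
      have b1 : P1 ≤ (3 * θ ^ 2) ^ a := by
        apply Real.rpow_le_rpow (div_nonneg (hμpos _).le (hμpos _).le) _ ha.le
        rw [div_le_iff₀ (hμpos _)]
        calc μ (q + 1) ≤ 3 * θ ^ 2 * μ (p + 1) := hRat
          _ ≤ 3 * θ ^ 2 * μ (j + 1) :=
            mul_le_mul_of_nonneg_left (hmono.monotone (by omega)) h3θ0.le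
      have b2 : P2 ≤ (3 * θ ^ 2) ^ a' := by
        apply Real.rpow_le_rpow (div_nonneg (hμpos _).le (hμpos _).le) _ ha'.le
        rw [div_le_iff₀ (hμpos _)]
        calc μ j ≤ μ (q + 1) := hmono.monotone (by omega)
          _ ≤ 3 * θ ^ 2 * μ (p + 1) := hRat
      calc P1 * P2 ≤ (3 * θ ^ 2) ^ a * (3 * θ ^ 2) ^ a' :=
            mul_le_mul b1 b2 hP2nn (Real.rpow_nonneg h3θ0.le _)
        _ = B := (Real.rpow_add h3θ0 a a').symm
    have hKP1 : 0 ≤ K * P1 := mul_nonneg hK.le hP1nn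
    calc Nrm (q + 1) (evolE A (q + 1) (j + 1) (g j u - g j v))
        ≤ K * P1 * Nrm (j + 1) (g j u - g j v) := t1
      _ ≤ K * P1 * (c * ((μ (j + 1) - μ j) / μ j) * Nrm j (u - v)) :=
          mul_le_mul_of_nonneg_left t2 hKP1
      _ ≤ K * P1 * (c * ((μ (j + 1) - μ j) / μ j) * (K' * P2 * D)) := by
          apply mul_le_mul_of_nonneg_left _ hKP1
          exact mul_le_mul_of_nonneg_left t3
            (mul_nonneg hc.le hr0)
      _ = (c * K * K' * D * ((μ (j + 1) - μ j) / μ j)) * (P1 * P2) := by ring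
      _ ≤ (c * K * K' * D * ((μ (j + 1) - μ j) / μ j)) * B := by
          apply mul_le_mul_of_nonneg_left hPP
          have : 0 ≤ c * K * K' * D := by positivity
          positivity
      _ = c * K * K' * B * D * ((μ (j + 1) - μ j) / μ j) := by ring
  -- sum of ratios bound
  have hsum : ∑ j ∈ Finset.Icc (p + 1) q, (μ (j + 1) - μ j) / μ j ≤
      θ * Real.log (3 * θ ^ 2) := by
    have hterm : ∀ j, (μ (j + 1) - μ j) / μ j ≤
        θ * (Real.log (μ (j + 1)) - Real.log (μ j)) := by
      intro j
      set s := μ (j + 1) / μ j with hs_def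
      have hs0 : 0 < s := div_pos (hμpos _) (hμpos _)
      have hs1 : 1 ≤ s := (one_le_div (hμpos j)).mpr (hmono.monotone (Nat.le_succ j))
      have hsθ : s ≤ θ := hμr j
      have hlog : 1 - s⁻¹ ≤ Real.log s := by
        have := Real.log_le_sub_one_of_pos (inv_pos.mpr hs0)
        rw [Real.log_inv] at this
        linarith
      have h6 : s - 1 ≤ θ * (1 - s⁻¹) := by
        have key6 : (θ * (1 - s⁻¹) - (s - 1)) * s = (θ - s) * (s - 1) := by
          field_simp
        have h8 : 0 ≤ (θ - s) * (s - 1) := mul_nonneg (by linarith) (by linarith)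
        nlinarith [key6, h8, hs0]
      have h7 : (μ (j + 1) - μ j) / μ j = s - 1 := by
        rw [hs_def, sub_div, div_self (ne_of_gt (hμpos j))]
      have h9 : Real.log s = Real.log (μ (j + 1)) - Real.log (μ j) :=
        Real.log_div (ne_of_gt (hμpos _)) (ne_of_gt (hμpos _))
      rw [h7, ← h9]
      calc s - 1 ≤ θ * (1 - s⁻¹) := h6
        _ ≤ θ * Real.log s := mul_le_mul_of_nonneg_left hlog hθ0.le
    have hmonoF : Monotone fun j => Real.log (μ j) := fun i j hij =>
      Real.log_le_log (hμpos i) (hmono.monotone hij)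
    calc ∑ j ∈ Finset.Icc (p + 1) q, (μ (j + 1) - μ j) / μ j
        ≤ ∑ j ∈ Finset.Icc (p + 1) q, θ * (Real.log (μ (j + 1)) - Real.log (μ j)) :=
          Finset.sum_le_sum fun j _ => hterm j
      _ = θ * ∑ j ∈ Finset.Icc (p + 1) q, (Real.log (μ (j + 1)) - Real.log (μ j)) :=
          (Finset.mul_sum _ _ _).symm
      _ ≤ θ * (Real.log (μ (q + 1)) - Real.log (μ (p + 1))) :=
          mul_le_mul_of_nonneg_left (sum_Icc_sub_le' _ hmonoF (by omega)) hθ0.le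
      _ ≤ θ * Real.log (3 * θ ^ 2) := by
          apply mul_le_mul_of_nonneg_left _ hθ0.le
          have : Real.log (μ (q + 1)) - Real.log (μ (p + 1)) =
              Real.log (μ (q + 1) / μ (p + 1)) :=
            (Real.log_div (ne_of_gt (hμpos _)) (ne_of_gt (hμpos _))).symm
          rw [this]
          apply Real.log_le_log (div_pos (hμpos _) (hμpos _))
          rw [div_le_iff₀ (hμpos _)]
          linarith [hRat]
  -- assemble
  calc Nrm (q + 1) (fSeq A g μ n x - fSeq A g μ n y)
      = Nrm (q + 1) (∑ j ∈ Finset.Icc (p + 1) q, evolE A (q + 1) (j + 1)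
          (g j (nlEvol A g j (p + 1) x) - g j (nlEvol A g j (p + 1) y))) := by rw [hdiff]
    _ ≤ ∑ j ∈ Finset.Icc (p + 1) q, Nrm (q + 1) (evolE A (q + 1) (j + 1)
          (g j (nlEvol A g j (p + 1) x) - g j (nlEvol A g j (p + 1) y))) :=
        nrm_sum_le' hNrm _ _ _
    _ ≤ ∑ j ∈ Finset.Icc (p + 1) q, c * K * K' * B * D * ((μ (j + 1) - μ j) / μ j) :=
        Finset.sum_le_sum key
    _ = (c * K * K' * B * D) * ∑ j ∈ Finset.Icc (p + 1) q, (μ (j + 1) - μ j) / μ j :=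
        (Finset.mul_sum _ _ _).symm
    _ ≤ (c * K * K' * B * D) * (θ * Real.log (3 * θ ^ 2)) := by
        apply mul_le_mul_of_nonneg_left hsum
        positivity
    _ = c * (K * K' * θ * B * Real.log (3 * θ ^ 2)) * D := by ring

end
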